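/- Let $X$ be a compact metric space, $f:X\to X$ continuous, $x\in X$, and $C$ a non-empty closed subset of $X$. Then $\overline{\omega}(x,f)\subseteq C$ if and only if $\lim_{n\to\infty}\frac{1}{n}\sum_{i=0}^{n-1}d(f^i(x),C)=0$, where $d(p,C)=\inf_{q\in C}d(p,q)$. -/

import Mathlib

open Filter Metric Set
open scoped Classical Topology

noncomputable def upperDensity (A : Set ℕ) : ℝ :=
  Filter.limsup
    (fun n : ℕ => (((Finset.range n).filter (fun i => i ∈ A)).card : ℝ) / n) Filter.atTop

def HasDensityOne (A : Set ℕ) : Prop :=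
  Filter.Tendsto
    (fun n : ℕ => (((Finset.range n).filter (fun i => i ∈ A)).card : ℝ) / n) Filter.atTop (nhds 1)

def omegaBarSeq {X : Type*} [MetricSpace X] (x : ℕ → X) : Set X :=
  {y | ∀ ε > 0, 0 < upperDensity {i | dist (x i) y < ε}}

def omegaBar {X : Type*} [MetricSpace X] (f : X → X) (x : X) : Set X :=
  omegaBarSeq (fun i => f^[i] x)

/-!
If every point of `ω̄(x, f)` lies in `C`, then for each `δ > 0` the compact set of points at
distance `≥ δ` from `C` is covered by finitely many balls each visited with upper density zero, so
the orbit is `δ`-close to `C` at a density-one set of times; as `d(·, C)` is bounded, its Cesàro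
means tend to zero. Conversely, a point `y ∉ C` has a ball on which `d(·, C) ≥ d(y, C) / 2`, so
visits to that ball of positive upper density keep the Cesàro means away from zero (Markov's
inequality).
-/

noncomputable def densityRatio (A : Set ℕ) (n : ℕ) : ℝ :=
  (((Finset.range n).filter (fun i => i ∈ A)).card : ℝ) / n

lemma upperDensity_eq_limsup (A : Set ℕ) : upperDensity A = limsup (densityRatio A) atTop := rfl

lemma densityRatio_eq (A : Set ℕ) (n : ℕ) :
    densityRatio A n = (∑ i ∈ Finset.range n, if i ∈ A then (1 : ℝ) else 0) / n := by
  rw [densityRatio, Finset.natCast_card_filter]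

lemma densityRatio_nonneg (A : Set ℕ) (n : ℕ) : 0 ≤ densityRatio A n := by
  unfold densityRatio; positivity

lemma densityRatio_le_one (A : Set ℕ) (n : ℕ) : densityRatio A n ≤ 1 :=
  div_le_one_of_le₀ (mod_cast (Finset.card_filter_le _ _).trans (Finset.card_range n).le)
    n.cast_nonneg

lemma isBoundedUnder_le_densityRatio (A : Set ℕ) :
    IsBoundedUnder (· ≤ ·) atTop (densityRatio A) :=
  isBoundedUnder_of ⟨1, densityRatio_le_one A⟩

lemma isBoundedUnder_ge_densityRatio (A : Set ℕ) :
    IsBoundedUnder (· ≥ ·) atTop (densityRatio A) :=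
  isBoundedUnder_of ⟨0, densityRatio_nonneg A⟩

lemma densityRatio_mono {A B : Set ℕ} (h : A ⊆ B) (n : ℕ) : densityRatio A n ≤ densityRatio B n :=
  div_le_div_of_nonneg_right
    (mod_cast Finset.card_le_card (Finset.monotone_filter_right _ fun _ _ hi => h hi))
    n.cast_nonneg

lemma densityRatio_union_le (A B : Set ℕ) (n : ℕ) :
    densityRatio (A ∪ B) n ≤ densityRatio A n + densityRatio B n := by
  simp only [densityRatio_eq, ← add_div, ← Finset.sum_add_distrib]
  refine div_le_div_of_nonneg_right (Finset.sum_le_sum fun i _ => ?_) n.cast_nonneg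
  by_cases hA : i ∈ A <;> by_cases hB : i ∈ B <;> simp [hA, hB]

lemma upperDensity_nonneg (A : Set ℕ) : 0 ≤ upperDensity A :=
  le_limsup_of_le (isBoundedUnder_le_densityRatio A) fun _ hb =>
    (hb.exists.elim fun n hn => (densityRatio_nonneg A n).trans hn)

lemma upperDensity_mono {A B : Set ℕ} (h : A ⊆ B) : upperDensity A ≤ upperDensity B :=
  limsup_le_limsup (Eventually.of_forall (densityRatio_mono h))
    (isBoundedUnder_ge_densityRatio A).isCoboundedUnder_le (isBoundedUnder_le_densityRatio B)

lemma upperDensity_union_le (A B : Set ℕ) :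
    upperDensity (A ∪ B) ≤ upperDensity A + upperDensity B :=
  (limsup_le_limsup (Eventually.of_forall (densityRatio_union_le A B))
      (isBoundedUnder_ge_densityRatio _).isCoboundedUnder_le
      (isBoundedUnder_of ⟨1 + 1, fun n =>
        add_le_add (densityRatio_le_one A n) (densityRatio_le_one B n)⟩)).trans
    (limsup_add_le (isBoundedUnder_ge_densityRatio A) (isBoundedUnder_le_densityRatio A)
      (isBoundedUnder_ge_densityRatio B).isCoboundedUnder_le (isBoundedUnder_le_densityRatio B))

lemma upperDensity_empty : upperDensity ∅ = 0 := by
  have : densityRatio ∅ = fun _ => 0 := funext fun n => by simp [densityRatio]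
  rw [upperDensity_eq_limsup, this, limsup_const]

lemma upperDensity_biUnion_le {ι : Type*} (s : Finset ι) (A : ι → Set ℕ) :
    upperDensity (⋃ j ∈ s, A j) ≤ ∑ j ∈ s, upperDensity (A j) := by
  classical
  induction s using Finset.induction_on with
  | empty => simp [upperDensity_empty]
  | insert j s hj ih =>
    rw [Finset.set_biUnion_insert, Finset.sum_insert hj]
    exact (upperDensity_union_le _ _).trans (add_le_add_right ih _)

lemma upperDensity_eq_zero_iff (A : Set ℕ) :
    upperDensity A = 0 ↔ Tendsto (densityRatio A) atTop (𝓝 0) := by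
  refine ⟨fun h => ?_, Tendsto.limsup_eq⟩
  refine tendsto_of_le_liminf_of_limsup_le ?_ h.le (isBoundedUnder_le_densityRatio A)
    (isBoundedUnder_ge_densityRatio A)
  exact le_liminf_of_le (isBoundedUnder_le_densityRatio A).isCoboundedUnder_ge
    (Eventually.of_forall (densityRatio_nonneg A))

section CesaroMean

variable {a : ℕ → ℝ} {δ : ℝ}

lemma densityRatio_setOf_le_le_mean_div (ha : ∀ i, 0 ≤ a i) (hδ : 0 < δ) (n : ℕ) :
    densityRatio {i | δ ≤ a i} n ≤ (∑ i ∈ Finset.range n, a i) / n / δ := by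
  rw [densityRatio_eq, div_right_comm, Finset.sum_div _ a]
  refine div_le_div_of_nonneg_right (Finset.sum_le_sum fun i _ => ?_) n.cast_nonneg
  split_ifs with hi
  · exact (one_le_div hδ).2 hi
  · exact div_nonneg (ha i) hδ.le

lemma upperDensity_setOf_le_eq_zero (ha : ∀ i, 0 ≤ a i)
    (h : Tendsto (fun n : ℕ => (∑ i ∈ Finset.range n, a i) / n) atTop (𝓝 0)) (hδ : 0 < δ) :
    upperDensity {i | δ ≤ a i} = 0 := by
  rw [upperDensity_eq_zero_iff]
  exact tendsto_of_tendsto_of_tendsto_of_le_of_le tendsto_const_nhds (by simpa using h.div_const δ)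
    (densityRatio_nonneg _) (densityRatio_setOf_le_le_mean_div ha hδ)

lemma mean_le_add_mul_densityRatio {M : ℝ} (haM : ∀ i, a i ≤ M) (hδ : 0 ≤ δ) (n : ℕ) :
    (∑ i ∈ Finset.range n, a i) / n ≤ δ + M * densityRatio {i | δ ≤ a i} n := by
  rcases n.eq_zero_or_pos with rfl | hn
  · simpa [densityRatio] using hδ
  have hn' : (0 : ℝ) < n := mod_cast hn
  rw [densityRatio_eq, mul_div_assoc', add_div' _ _ _ hn'.ne', Finset.mul_sum]
  refine div_le_div_of_nonneg_right ?_ hn'.le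
  calc ∑ i ∈ Finset.range n, a i
      ≤ ∑ i ∈ Finset.range n, (δ + M * if δ ≤ a i then 1 else 0) :=
        Finset.sum_le_sum fun i _ => by split_ifs with hi <;> linarith [haM i]
    _ = δ * n + ∑ i ∈ Finset.range n, M * if δ ≤ a i then 1 else 0 := by
        simp [Finset.sum_add_distrib, mul_comm]

lemma tendsto_mean_zero_of_upperDensity_eq_zero (ha : ∀ i, 0 ≤ a i) {M : ℝ}
    (haM : ∀ i, a i ≤ M) (h : ∀ δ > 0, upperDensity {i | δ ≤ a i} = 0) :
    Tendsto (fun n : ℕ => (∑ i ∈ Finset.range n, a i) / n) atTop (𝓝 0) := by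
  refine tendsto_order.2 ⟨fun b hb => Eventually.of_forall fun n => hb.trans_le ?_,
    fun ε hε => ?_⟩
  · exact div_nonneg (Finset.sum_nonneg fun i _ => ha i) n.cast_nonneg
  have hratio := ((upperDensity_eq_zero_iff _).1 (h (ε / 2) (half_pos hε))).const_mul M
  rw [mul_zero] at hratio
  filter_upwards [hratio.eventually (gt_mem_nhds (half_pos hε))] with n hn
  linarith [mean_le_add_mul_densityRatio haM (half_pos hε).le n]

end CesaroMean

section OmegaBar

variable {X : Type*} [MetricSpace X] {x : ℕ → X}

lemma upperDensity_eq_zero_of_isCompact_of_disjoint {K : Set X} (hK : IsCompact K)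
    (hdisj : Disjoint K (omegaBarSeq x)) : upperDensity {i | x i ∈ K} = 0 := by
  have hfar : ∀ y ∈ K, ∃ ε > 0, upperDensity {i | dist (x i) y < ε} ≤ 0 := fun y hy => by
    simpa [omegaBarSeq] using hdisj.notMem_of_mem_left hy
  choose ε hε hzero using hfar
  obtain ⟨t, hcover⟩ :=
    hK.elim_nhds_subcover' (fun y hy => ball y (ε y hy)) fun y hy => ball_mem_nhds y (hε y hy)
  have hsub : {i | x i ∈ K} ⊆ ⋃ y ∈ t, {i | dist (x i) y < ε y y.2} := fun i hi => by
    simpa using hcover hi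
  refine le_antisymm ?_ (upperDensity_nonneg _)
  calc upperDensity {i | x i ∈ K}
      ≤ ∑ y ∈ t, upperDensity {i | dist (x i) y < ε y y.2} :=
        (upperDensity_mono hsub).trans (upperDensity_biUnion_le t _)
    _ ≤ 0 := Finset.sum_nonpos fun y _ => hzero y y.2

lemma tendsto_mean_infDist_of_omegaBarSeq_subset [CompactSpace X] {C : Set X}
    (hsub : omegaBarSeq x ⊆ C) :
    Tendsto (fun n : ℕ => (∑ i ∈ Finset.range n, infDist (x i) C) / n) atTop (𝓝 0) := by
  obtain ⟨M, hM⟩ := (isCompact_range (continuous_infDist_pt C)).isBounded.bddAbove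
  refine tendsto_mean_zero_of_upperDensity_eq_zero (fun _ => infDist_nonneg)
    (fun i => hM ⟨x i, rfl⟩) fun δ hδ => ?_
  refine upperDensity_eq_zero_of_isCompact_of_disjoint (K := {p | δ ≤ infDist p C})
    (isClosed_le continuous_const (continuous_infDist_pt C)).isCompact ?_
  refine disjoint_left.2 fun p hp hpω => ?_
  have : infDist p C = 0 := infDist_zero_of_mem (hsub hpω)
  exact hδ.not_ge (this ▸ hp)

lemma omegaBarSeq_subset_of_tendsto_mean_infDist {C : Set X} (hC : IsClosed C)
    (hCne : C.Nonempty)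
    (h : Tendsto (fun n : ℕ => (∑ i ∈ Finset.range n, infDist (x i) C) / n) atTop (𝓝 0)) :
    omegaBarSeq x ⊆ C := by
  intro y hy
  by_contra hyC
  have hδ : 0 < infDist y C / 2 := half_pos ((hC.notMem_iff_infDist_pos hCne).1 hyC)
  have hball : {i | dist (x i) y < infDist y C / 2} ⊆ {i | infDist y C / 2 ≤ infDist (x i) C} :=
    fun i (hi : dist (x i) y < _) => show infDist y C / 2 ≤ infDist (x i) C by
      linarith [infDist_le_infDist_add_dist (x := y) (y := x i) (s := C), dist_comm (x i) y]
  have := (hy _ hδ).trans_le (upperDensity_mono hball)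
  rw [upperDensity_setOf_le_eq_zero (fun _ => infDist_nonneg) h hδ] at this
  exact this.false

end OmegaBar

theorem stmt14_general {X : Type*} [MetricSpace X] [CompactSpace X] (f : X → X)
    (x : X) (C : Set X) (hC : IsClosed C) (hCne : C.Nonempty) :
    omegaBar f x ⊆ C ↔
      Filter.Tendsto (fun n : ℕ => (∑ i ∈ Finset.range n, Metric.infDist (f^[i] x) C) / n)
        Filter.atTop (nhds 0) :=
  ⟨tendsto_mean_infDist_of_omegaBarSeq_subset, omegaBarSeq_subset_of_tendsto_mean_infDist hC hCne⟩

theorem stmt14 {X : Type*} [MetricSpace X] [CompactSpace X] (f : X → X) (hf : Continuous f)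
    (x : X) (C : Set X) (hC : IsClosed C) (hCne : C.Nonempty) :
    omegaBar f x ⊆ C ↔
      Filter.Tendsto (fun n : ℕ => (∑ i ∈ Finset.range n, Metric.infDist (f^[i] x) C) / n)
        Filter.atTop (nhds 0) :=
  stmt14_general f x C hC hCne
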